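/- arXiv:1710.02013 — 12 statements merged into one kernel-verified Lean document; each statement's English description precedes it below -/
import Mathlib

section
/- Let G be a graph without isolated vertices, and let G' be obtained from G by adding three new vertices u, v, w forming a triangle among themselves, with u additionally connected to every vertex of G. Then γ_m(G') = γ_t(G) + 3, where γ_m is the minimum size of a 1-uniform edge monitoring set of G' and γ_t(G) is the minimum size of a total dominating set of G. -/
/-- `S` is a 1-uniform edge monitoring set of `G`. -/
def edgeMonitoringSet {V : Type*} (G : SimpleGraph V) (S : Set V) : Prop :=
  ∀ x y, G.Adj x y → ∃ v ∈ S, G.Adj v x ∧ G.Adj v y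

/-- `S` is a total dominating set of `G`. -/
def totalDomSet {V : Type*} (G : SimpleGraph V) (S : Set V) : Prop :=
  ∀ x, ∃ v ∈ S, G.Adj x v

/-- The graph obtained from `G` by adding three new vertices `u = inr 0`, `v = inr 1`,
`w = inr 2` forming a triangle, with `u` additionally connected to every vertex of `G`. -/
def addTriangle {V : Type*} (G : SimpleGraph V) : SimpleGraph (V ⊕ Fin 3) :=
  SimpleGraph.fromRel (fun x y =>
    match x, y with
    | Sum.inl a, Sum.inl b => G.Adj a b
    | Sum.inr _, Sum.inr _ => True
    | Sum.inl _, Sum.inr i => i = 0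
    | Sum.inr i, Sum.inl _ => i = 0)

lemma adj_ll {V : Type*} {G : SimpleGraph V} {a b : V} :
    (addTriangle G).Adj (Sum.inl a) (Sum.inl b) ↔ G.Adj a b := by
  simp [addTriangle, SimpleGraph.fromRel_adj, G.adj_comm b a]
  intro h; exact h.ne

lemma adj_lr {V : Type*} {G : SimpleGraph V} {a : V} {i : Fin 3} :
    (addTriangle G).Adj (Sum.inl a) (Sum.inr i) ↔ i = 0 := by
  simp [addTriangle, SimpleGraph.fromRel_adj]

lemma adj_rr {V : Type*} {G : SimpleGraph V} {i j : Fin 3} :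
    (addTriangle G).Adj (Sum.inr i) (Sum.inr j) ↔ i ≠ j := by
  simp [addTriangle, SimpleGraph.fromRel_adj]

lemma card_decomp {V : Type*} [Fintype V] (T : Set V) :
    (Sum.inl '' T ∪ Set.range (Sum.inr : Fin 3 → V ⊕ Fin 3)).ncard = T.ncard + 3 := by
  rw [Set.ncard_union_eq ?_ (Set.toFinite _) (Set.toFinite _),
    Set.ncard_image_of_injective _ Sum.inl_injective,
    ← Set.image_univ, Set.ncard_image_of_injective _ Sum.inr_injective, Set.ncard_univ]
  · simp
  · rw [Set.disjoint_iff_forall_ne]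
    rintro x ⟨a, _, rfl⟩ y ⟨i, rfl⟩
    simp

theorem stmt2 {V : Type*} [Fintype V] (G : SimpleGraph V)
    (hniso : ∀ a : V, ∃ b, G.Adj a b) :
    sInf {n : ℕ | ∃ S : Set (V ⊕ Fin 3), edgeMonitoringSet (addTriangle G) S ∧ S.ncard = n}
      = sInf {n : ℕ | ∃ S : Set V, totalDomSet G S ∧ S.ncard = n} + 3 := by
  set A := {n : ℕ | ∃ S : Set (V ⊕ Fin 3), edgeMonitoringSet (addTriangle G) S ∧ S.ncard = n}
    with hA
  set B := {n : ℕ | ∃ S : Set V, totalDomSet G S ∧ S.ncard = n} with hB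
  -- any total dominating set yields a monitoring set
  have key : ∀ T : Set V, totalDomSet G T →
      edgeMonitoringSet (addTriangle G) (Sum.inl '' T ∪ Set.range Sum.inr) := by
    intro T hT x y hxy
    have memr : ∀ i : Fin 3, Sum.inr i ∈ Sum.inl '' T ∪ Set.range (Sum.inr : Fin 3 → V ⊕ Fin 3) :=
      fun i => Or.inr ⟨i, rfl⟩
    match x, y with
    | Sum.inl a, Sum.inl b =>
        exact ⟨Sum.inr 0, memr 0, (adj_lr.mpr rfl).symm, (adj_lr.mpr rfl).symm⟩
    | Sum.inl a, Sum.inr i =>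
        have hi : i = 0 := adj_lr.mp hxy
        obtain ⟨d, hd, hda⟩ := hT a
        exact ⟨Sum.inl d, Or.inl ⟨d, hd, rfl⟩, adj_ll.mpr hda.symm, by rw [hi]; exact adj_lr.mpr rfl⟩
    | Sum.inr i, Sum.inl a =>
        have hi : i = 0 := adj_lr.mp hxy.symm
        obtain ⟨d, hd, hda⟩ := hT a
        exact ⟨Sum.inl d, Or.inl ⟨d, hd, rfl⟩, by rw [hi]; exact adj_lr.mpr rfl, adj_ll.mpr hda.symm⟩
    | Sum.inr i, Sum.inr j =>
        have hij : i ≠ j := adj_rr.mp hxy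
        have hex : ∀ i j : Fin 3, i ≠ j → ∃ k : Fin 3, k ≠ i ∧ k ≠ j := by decide
        obtain ⟨k, hki, hkj⟩ := hex i j hij
        exact ⟨Sum.inr k, memr k, adj_rr.mpr hki, adj_rr.mpr hkj⟩
  have hBne : B.Nonempty := by
    refine ⟨(Set.univ : Set V).ncard, Set.univ, fun x => ?_, rfl⟩
    obtain ⟨b, hb⟩ := hniso x
    exact ⟨b, trivial, hb⟩
  obtain ⟨T, hT, hTcard⟩ := Nat.sInf_mem hBne
  have hAne : A.Nonempty :=
    ⟨T.ncard + 3, Sum.inl '' T ∪ Set.range Sum.inr, key T hT, card_decomp T⟩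
  obtain ⟨S, hS, hScard⟩ := Nat.sInf_mem hAne
  -- triangle vertices are in S
  have third : ∀ i j : Fin 3, i ≠ j → ∀ m : Fin 3, m ≠ i → m ≠ j →
      (∀ k : Fin 3, k ≠ i ∧ k ≠ j → k = m) := by decide
  have hr : ∀ m : Fin 3, Sum.inr m ∈ S := by
    intro m
    obtain ⟨i, j, hij, hmi, hmj⟩ : ∃ i j : Fin 3, i ≠ j ∧ m ≠ i ∧ m ≠ j := by
      revert m; decide
    obtain ⟨z, hzS, hz1, hz2⟩ := hS (Sum.inr i) (Sum.inr j) (adj_rr.mpr hij)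
    match z with
    | Sum.inl a =>
        have h1 : i = 0 := adj_lr.mp hz1
        have h2 : j = 0 := adj_lr.mp hz2
        exact absurd (h1.trans h2.symm) hij
    | Sum.inr k =>
        have : k = m := third i j hij m hmi hmj k ⟨adj_rr.mp hz1, adj_rr.mp hz2⟩
        rwa [this] at hzS
  -- the inl-part of S is a total dominating set
  set D : Set V := Sum.inl ⁻¹' S with hD
  have hDdom : totalDomSet G D := by
    intro a
    obtain ⟨z, hzS, hz1, hz2⟩ := hS (Sum.inl a) (Sum.inr 0) (adj_lr.mpr rfl)
    match z with
    | Sum.inr k =>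
        have h1 : k = 0 := adj_lr.mp hz1.symm
        have h2 : k ≠ 0 := adj_rr.mp hz2
        exact absurd h1 h2
    | Sum.inl b =>
        exact ⟨b, hzS, (adj_ll.mp hz1).symm⟩
  have hSdecomp : S = Sum.inl '' D ∪ Set.range Sum.inr := by
    ext z
    match z with
    | Sum.inl a =>
        simp only [Set.mem_union, Set.mem_image, Set.mem_range]
        constructor
        · intro h; exact Or.inl ⟨a, h, rfl⟩
        · rintro (⟨b, hb, he⟩ | ⟨i, he⟩)
          · obtain rfl : b = a := Sum.inl_injective he; exact hb
          · exact absurd he (by simp)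
    | Sum.inr i =>
        simp only [Set.mem_union, Set.mem_range]
        exact ⟨fun _ => Or.inr ⟨i, rfl⟩, fun _ => hr i⟩
  have hScard' : S.ncard = D.ncard + 3 := by rw [hSdecomp]; exact card_decomp D
  apply le_antisymm
  · calc sInf A ≤ T.ncard + 3 := Nat.sInf_le ⟨_, key T hT, card_decomp T⟩
      _ = sInf B + 3 := by rw [hTcard]
  · have h1 : sInf B ≤ D.ncard := Nat.sInf_le ⟨D, hDdom, rfl⟩
    calc sInf B + 3 ≤ D.ncard + 3 := by omega
      _ = S.ncard := hScard'.symm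
      _ = sInf A := hScard
end

section
/- Let G be a graph without isolated vertices and let S be a 1-uniform edge monitoring set of G. Then S is a total dominating set of G. -/
theorem stmt3 {V : Type*} (G : SimpleGraph V) (hniso : ∀ a : V, ∃ b, G.Adj a b)
    (S : Set V) (hS : edgeMonitoringSet G S) : totalDomSet G S := by
  intro x
  obtain ⟨b, hb⟩ := hniso x
  obtain ⟨v, hv, hvx, _⟩ := hS x b hb
  exact ⟨v, hv, hvx.symm⟩
end

section
/- Let G be the join of two graphs G₁ = (V₁, E₁) and G₂ = (V₂, E₂), and let S be a 1-uniform edge monitoring set of G. Then S ∩ V₁ is a total dominating set of G₁ or S ∩ V₂ is a total dominating set of G₂. -/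
/-- The join of two graphs on disjoint vertex sets. -/
def joinGraph {V₁ V₂ : Type*} (G₁ : SimpleGraph V₁) (G₂ : SimpleGraph V₂) :
    SimpleGraph (V₁ ⊕ V₂) :=
  SimpleGraph.fromRel (fun x y =>
    match x, y with
    | Sum.inl a, Sum.inl b => G₁.Adj a b
    | Sum.inr a, Sum.inr b => G₂.Adj a b
    | _, _ => True)

theorem stmt5 {V₁ V₂ : Type*} (G₁ : SimpleGraph V₁) (G₂ : SimpleGraph V₂)
    (S : Set (V₁ ⊕ V₂)) (hS : edgeMonitoringSet (joinGraph G₁ G₂) S) :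
    totalDomSet G₁ (Sum.inl ⁻¹' S) ∨ totalDomSet G₂ (Sum.inr ⁻¹' S) := by
  by_contra h
  push_neg at h
  obtain ⟨h1, h2⟩ := h
  simp only [totalDomSet, not_forall, not_exists] at h1 h2
  obtain ⟨x, hx⟩ := h1
  obtain ⟨y, hy⟩ := h2
  have hadj : (joinGraph G₁ G₂).Adj (Sum.inl x) (Sum.inr y) := by
    simp [joinGraph, SimpleGraph.fromRel_adj]
  obtain ⟨v, hvS, hvx, hvy⟩ := hS _ _ hadj
  cases v with
  | inl a =>
    have hadj2 : G₁.Adj x a := by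
      simp only [joinGraph, SimpleGraph.fromRel_adj] at hvx
      exact (hvx.2.elim (fun h => h.symm) id)
    exact hx a ⟨hvS, hadj2⟩
  | inr b =>
    have hadj2 : G₂.Adj y b := by
      simp only [joinGraph, SimpleGraph.fromRel_adj] at hvy
      exact (hvy.2.elim (fun h => h.symm) id)
    exact hy b ⟨hvS, hadj2⟩
end

section
/- Let G be the join of two graphs G₁ = (V₁, E₁) and G₂ = (V₂, E₂), and let S be a minimal 1-uniform edge monitoring set of G (minimal with respect to set inclusion). Then |S ∩ V₁| ≤ 1 or |S ∩ V₂| ≤ 1. -/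
section Aux

variable {V₁ V₂ : Type*} (G₁ : SimpleGraph V₁) (G₂ : SimpleGraph V₂)

lemma adj_ll_s6 (a b : V₁) : (joinGraph G₁ G₂).Adj (Sum.inl a) (Sum.inl b) ↔ G₁.Adj a b := by
  simp [joinGraph, SimpleGraph.fromRel_adj]
  constructor
  · rintro ⟨h, h1 | h1⟩ <;> [exact h1; exact h1.symm]
  · intro h; exact ⟨fun e => h.ne e, Or.inl h⟩

lemma adj_rr_s6 (a b : V₂) : (joinGraph G₁ G₂).Adj (Sum.inr a) (Sum.inr b) ↔ G₂.Adj a b := by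
  simp [joinGraph, SimpleGraph.fromRel_adj]
  constructor
  · rintro ⟨h, h1 | h1⟩ <;> [exact h1; exact h1.symm]
  · intro h; exact ⟨fun e => h.ne e, Or.inl h⟩

lemma adj_lr_s6 (a : V₁) (b : V₂) : (joinGraph G₁ G₂).Adj (Sum.inl a) (Sum.inr b) := by
  simp [joinGraph, SimpleGraph.fromRel_adj]

lemma adj_rl (a : V₂) (b : V₁) : (joinGraph G₁ G₂).Adj (Sum.inr a) (Sum.inl b) := by
  simp [joinGraph, SimpleGraph.fromRel_adj]

/-- From minimality, each vertex of `S` has an "essential" edge monitored only by it. -/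
lemma essential {S : Set (V₁ ⊕ V₂)}
    (hS : edgeMonitoringSet (joinGraph G₁ G₂) S)
    (hmin : ∀ T ⊂ S, ¬ edgeMonitoringSet (joinGraph G₁ G₂) T)
    (v : V₁ ⊕ V₂) (hv : v ∈ S) :
    ∃ x y, (joinGraph G₁ G₂).Adj x y ∧
      (joinGraph G₁ G₂).Adj v x ∧ (joinGraph G₁ G₂).Adj v y ∧
      ∀ w ∈ S, w ≠ v →
        ¬((joinGraph G₁ G₂).Adj w x ∧ (joinGraph G₁ G₂).Adj w y) := by
  have hsub : S \ {v} ⊂ S := by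
    constructor
    · exact Set.diff_subset
    · intro h
      exact (h hv).2 rfl
  have hne := hmin _ hsub
  unfold edgeMonitoringSet at hne
  push_neg at hne
  obtain ⟨x, y, hxy, hno⟩ := hne
  obtain ⟨w, hw, hwx, hwy⟩ := hS x y hxy
  have hwv : w = v := by
    by_contra hcont
    exact hno w ⟨hw, hcont⟩ hwx hwy
  subst hwv
  refine ⟨x, y, hxy, hwx, hwy, fun u hu hune hc => ?_⟩
  exact hno u ⟨hu, hune⟩ hc.1 hc.2

end Aux

theorem stmt6 {V₁ V₂ : Type*} [Fintype V₁] [Fintype V₂]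
    (G₁ : SimpleGraph V₁) (G₂ : SimpleGraph V₂) (S : Set (V₁ ⊕ V₂))
    (hS : edgeMonitoringSet (joinGraph G₁ G₂) S)
    (hmin : ∀ T ⊂ S, ¬ edgeMonitoringSet (joinGraph G₁ G₂) T) :
    (Sum.inl ⁻¹' S).ncard ≤ 1 ∨ (Sum.inr ⁻¹' S).ncard ≤ 1 := by
  by_contra hcon
  push_neg at hcon
  obtain ⟨h1, h2⟩ := hcon
  rw [Set.one_lt_ncard_iff (Set.toFinite _)] at h1 h2
  obtain ⟨a₁, a₂, ha₁, ha₂, hane⟩ := h1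
  obtain ⟨b₁, b₂, hb₁, hb₂, hbne⟩ := h2
  simp only [Set.mem_preimage] at ha₁ ha₂ hb₁ hb₂
  -- Essential edge of `inl a₂` : it must be a cross edge
  obtain ⟨x, y, hxy, hvx, hvy, huniq⟩ := essential G₁ G₂ hS hmin (Sum.inl a₂) ha₂
  -- Extract cross edge data for inl a₂: u : V₁, t : V₂ with the key properties
  have key1 : ∃ (u : V₁) (t : V₂),
      (∀ a, Sum.inl a ∈ S → a ≠ a₂ → ¬ G₁.Adj a u) ∧
      (∀ b, Sum.inr b ∈ S → ¬ G₂.Adj b t) := by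
    rcases x with u | t <;> rcases y with u' | t'
    · -- both in V₁ : monitored by inr b₁ too, contradiction
      exact absurd ⟨adj_rl G₁ G₂ b₁ u, adj_rl G₁ G₂ b₁ u'⟩
        (huniq (Sum.inr b₁) hb₁ (by simp))
    · -- cross (inl u, inr t')
      refine ⟨u, t', fun a ha hne hadj => ?_, fun b hb hadj => ?_⟩
      · exact huniq (Sum.inl a) ha (by simpa using hne)
          ⟨(adj_ll_s6 G₁ G₂ a u).mpr hadj, adj_lr_s6 G₁ G₂ a t'⟩
      · exact huniq (Sum.inr b) hb (by simp)
          ⟨adj_rl G₁ G₂ b u, (adj_rr_s6 G₁ G₂ b t').mpr hadj⟩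
    · -- cross (inr t, inl u')
      refine ⟨u', t, fun a ha hne hadj => ?_, fun b hb hadj => ?_⟩
      · exact huniq (Sum.inl a) ha (by simpa using hne)
          ⟨adj_lr_s6 G₁ G₂ a t, (adj_ll_s6 G₁ G₂ a u').mpr hadj⟩
      · exact huniq (Sum.inr b) hb (by simp)
          ⟨(adj_rr_s6 G₁ G₂ b t).mpr hadj, adj_rl G₁ G₂ b u'⟩
    · -- both in V₂ : monitored by inl a₁ too, contradiction
      exact absurd ⟨adj_lr_s6 G₁ G₂ a₁ t, adj_lr_s6 G₁ G₂ a₁ t'⟩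
        (huniq (Sum.inl a₁) ha₁ (by simpa using hane))
  obtain ⟨u, t, hkey1a, hkey1b⟩ := key1
  -- Essential edge of `inr b₂`
  obtain ⟨x', y', hxy', hvx', hvy', huniq'⟩ := essential G₁ G₂ hS hmin (Sum.inr b₂) hb₂
  have key2 : ∃ (u' : V₁) (t' : V₂),
      (∀ a, Sum.inl a ∈ S → ¬ G₁.Adj a u') ∧
      (∀ b, Sum.inr b ∈ S → b ≠ b₂ → ¬ G₂.Adj b t') := by
    rcases x' with u | t <;> rcases y' with u' | t'
    · exact absurd ⟨adj_rl G₁ G₂ b₁ u, adj_rl G₁ G₂ b₁ u'⟩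
        (huniq' (Sum.inr b₁) hb₁ (by simpa using hbne))
    · refine ⟨u, t', fun a ha hadj => ?_, fun b hb hne hadj => ?_⟩
      · exact huniq' (Sum.inl a) ha (by simp)
          ⟨(adj_ll_s6 G₁ G₂ a u).mpr hadj, adj_lr_s6 G₁ G₂ a t'⟩
      · exact huniq' (Sum.inr b) hb (by simpa using hne)
          ⟨adj_rl G₁ G₂ b u, (adj_rr_s6 G₁ G₂ b t').mpr hadj⟩
    · refine ⟨u', t, fun a ha hadj => ?_, fun b hb hne hadj => ?_⟩
      · exact huniq' (Sum.inl a) ha (by simp)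
          ⟨adj_lr_s6 G₁ G₂ a t, (adj_ll_s6 G₁ G₂ a u').mpr hadj⟩
      · exact huniq' (Sum.inr b) hb (by simpa using hne)
          ⟨(adj_rr_s6 G₁ G₂ b t).mpr hadj, adj_rl G₁ G₂ b u'⟩
    · exact absurd ⟨adj_lr_s6 G₁ G₂ a₁ t, adj_lr_s6 G₁ G₂ a₁ t'⟩
        (huniq' (Sum.inl a₁) ha₁ (by simp))
  obtain ⟨u', t', hkey2a, hkey2b⟩ := key2
  -- The cross edge (inl u', inr t) can be monitored by nobody: contradiction
  obtain ⟨w, hw, hwx, hwy⟩ := hS (Sum.inl u') (Sum.inr t) (adj_lr_s6 G₁ G₂ u' t)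
  rcases w with a | b
  · exact hkey2a a hw ((adj_ll_s6 G₁ G₂ a u').mp hwx)
  · exact hkey1b b hw ((adj_rr_s6 G₁ G₂ b t).mp hwy)
end

section
/- Let G be the join of two graphs G₁ = (V₁, E₁) and G₂ = (V₂, E₂), let S ⊆ V₁ ∪ V₂, S₁ = S ∩ V₁ and S₂ = S ∩ V₂, with S₁ ≠ ∅ and S₂ ≠ ∅. Then S is a 1-uniform edge monitoring set of G if and only if S₁ is a total dominating set of G₁ or S₂ is a total dominating set of G₂. -/
lemma join_ll {V₁ V₂ : Type*} {G₁ : SimpleGraph V₁} {G₂ : SimpleGraph V₂} {a b : V₁} :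
    (joinGraph G₁ G₂).Adj (Sum.inl a) (Sum.inl b) ↔ G₁.Adj a b := by
  constructor
  · rintro ⟨hne, h | h⟩
    · exact h
    · exact h.symm
  · intro h
    exact ⟨fun e => G₁.irrefl (Sum.inl.inj e ▸ h), Or.inl h⟩

lemma join_rr {V₁ V₂ : Type*} {G₁ : SimpleGraph V₁} {G₂ : SimpleGraph V₂} {a b : V₂} :
    (joinGraph G₁ G₂).Adj (Sum.inr a) (Sum.inr b) ↔ G₂.Adj a b := by
  constructor
  · rintro ⟨hne, h | h⟩
    · exact h
    · exact h.symm
  · intro h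
    exact ⟨fun e => G₂.irrefl (Sum.inr.inj e ▸ h), Or.inl h⟩

lemma join_lr {V₁ V₂ : Type*} {G₁ : SimpleGraph V₁} {G₂ : SimpleGraph V₂} {a : V₁} {b : V₂} :
    (joinGraph G₁ G₂).Adj (Sum.inl a) (Sum.inr b) :=
  ⟨Sum.inl_ne_inr, Or.inl trivial⟩

lemma join_rl {V₁ V₂ : Type*} {G₁ : SimpleGraph V₁} {G₂ : SimpleGraph V₂} {a : V₂} {b : V₁} :
    (joinGraph G₁ G₂).Adj (Sum.inr a) (Sum.inl b) :=
  ⟨Sum.inr_ne_inl, Or.inl trivial⟩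

theorem stmt7 {V₁ V₂ : Type*} (G₁ : SimpleGraph V₁) (G₂ : SimpleGraph V₂)
    (S : Set (V₁ ⊕ V₂))
    (h1 : (Sum.inl ⁻¹' S).Nonempty) (h2 : (Sum.inr ⁻¹' S).Nonempty) :
    edgeMonitoringSet (joinGraph G₁ G₂) S ↔
      (totalDomSet G₁ (Sum.inl ⁻¹' S) ∨ totalDomSet G₂ (Sum.inr ⁻¹' S)) := by
  obtain ⟨s₁, hs₁⟩ := h1
  obtain ⟨s₂, hs₂⟩ := h2
  constructor
  · intro hmon
    by_contra hc
    push_neg at hc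
    obtain ⟨hnd₁, hnd₂⟩ := hc
    simp only [totalDomSet, not_forall] at hnd₁ hnd₂
    obtain ⟨x, hx⟩ := hnd₁
    obtain ⟨y, hy⟩ := hnd₂
    push_neg at hx hy
    obtain ⟨v, hv, hvx, hvy⟩ := hmon (Sum.inl x) (Sum.inr y) join_lr
    cases v with
    | inl a => exact hx a hv (join_ll.mp hvx).symm
    | inr b => exact hy b hv (join_rr.mp hvy).symm
  · rintro (hd | hd) <;> intro x y hxy
    · cases x with
      | inl a =>
        cases y with
        | inl b =>
          exact ⟨Sum.inr s₂, hs₂, join_rl, join_rl⟩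
        | inr b =>
          obtain ⟨v, hv, hav⟩ := hd a
          exact ⟨Sum.inl v, hv, join_ll.mpr hav.symm, join_lr⟩
      | inr a =>
        cases y with
        | inl b =>
          obtain ⟨v, hv, hbv⟩ := hd b
          exact ⟨Sum.inl v, hv, join_lr, join_ll.mpr hbv.symm⟩
        | inr b =>
          exact ⟨Sum.inl s₁, hs₁, join_lr, join_lr⟩
    · cases x with
      | inl a =>
        cases y with
        | inl b =>
          exact ⟨Sum.inr s₂, hs₂, join_rl, join_rl⟩
        | inr b =>
          obtain ⟨v, hv, hbv⟩ := hd b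
          exact ⟨Sum.inr v, hv, join_rl, join_rr.mpr hbv.symm⟩
      | inr a =>
        cases y with
        | inl b =>
          obtain ⟨v, hv, hav⟩ := hd a
          exact ⟨Sum.inr v, hv, join_rr.mpr hav.symm, join_rl⟩
        | inr b =>
          exact ⟨Sum.inl s₁, hs₁, join_lr, join_lr⟩
end

section
/- Let G be the join of G₁ = (V₁, E₁) and G₂ = (V₂, E₂), and S ⊆ V₁ (i.e., S ∩ V₂ = ∅). Then S is a 1-uniform edge monitoring set of G if and only if G₁ has no isolated vertices and S is a 1-uniform edge monitoring set of G₁. -/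
lemma join_adj_ll {V₁ V₂ : Type*} (G₁ : SimpleGraph V₁) (G₂ : SimpleGraph V₂) (a b : V₁) :
    (joinGraph G₁ G₂).Adj (Sum.inl a) (Sum.inl b) ↔ G₁.Adj a b := by
  simp only [joinGraph, SimpleGraph.fromRel_adj]
  constructor
  · rintro ⟨h, h1 | h1⟩
    · exact h1
    · exact h1.symm
  · intro h
    exact ⟨by simp [h.ne], Or.inl h⟩

lemma join_adj_lr {V₁ V₂ : Type*} (G₁ : SimpleGraph V₁) (G₂ : SimpleGraph V₂) (a : V₁) (b : V₂) :
    (joinGraph G₁ G₂).Adj (Sum.inl a) (Sum.inr b) := by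
  simp [joinGraph, SimpleGraph.fromRel_adj]

lemma join_adj_rr {V₁ V₂ : Type*} (G₁ : SimpleGraph V₁) (G₂ : SimpleGraph V₂) (a b : V₂) :
    (joinGraph G₁ G₂).Adj (Sum.inr a) (Sum.inr b) ↔ G₂.Adj a b := by
  simp only [joinGraph, SimpleGraph.fromRel_adj]
  constructor
  · rintro ⟨h, h1 | h1⟩
    · exact h1
    · exact h1.symm
  · intro h
    exact ⟨by simp [h.ne], Or.inl h⟩

theorem stmt8 {V₁ V₂ : Type*} [Nonempty V₁] [Nonempty V₂]
    (G₁ : SimpleGraph V₁) (G₂ : SimpleGraph V₂) (S : Set V₁) :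
    edgeMonitoringSet (joinGraph G₁ G₂) (Sum.inl '' S) ↔
      ((∀ a : V₁, ∃ b, G₁.Adj a b) ∧ edgeMonitoringSet G₁ S) := by
  constructor
  · intro h
    constructor
    · intro a
      obtain ⟨b⟩ := ‹Nonempty V₂›
      obtain ⟨v, hv, hva, _⟩ := h (Sum.inl a) (Sum.inr b) (join_adj_lr G₁ G₂ a b)
      obtain ⟨w, hwS, rfl⟩ := hv
      exact ⟨w, ((join_adj_ll G₁ G₂ w a).mp hva).symm⟩
    · intro x y hxy
      obtain ⟨v, hv, hvx, hvy⟩ := h (Sum.inl x) (Sum.inl y) ((join_adj_ll G₁ G₂ x y).mpr hxy)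
      obtain ⟨w, hwS, rfl⟩ := hv
      exact ⟨w, hwS, (join_adj_ll G₁ G₂ w x).mp hvx, (join_adj_ll G₁ G₂ w y).mp hvy⟩
  · rintro ⟨hiso, hmon⟩
    have hS : ∀ a : V₁, ∃ v ∈ S, G₁.Adj v a := by
      intro a
      obtain ⟨b, hab⟩ := hiso a
      obtain ⟨v, hv, hva, _⟩ := hmon a b hab
      exact ⟨v, hv, hva⟩
    rintro (x | x) (y | y) hxy
    · obtain ⟨v, hv, hvx, hvy⟩ := hmon x y ((join_adj_ll G₁ G₂ x y).mp hxy)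
      exact ⟨Sum.inl v, ⟨v, hv, rfl⟩, (join_adj_ll G₁ G₂ v x).mpr hvx,
        (join_adj_ll G₁ G₂ v y).mpr hvy⟩
    · obtain ⟨v, hv, hvx⟩ := hS x
      exact ⟨Sum.inl v, ⟨v, hv, rfl⟩, (join_adj_ll G₁ G₂ v x).mpr hvx, join_adj_lr G₁ G₂ v y⟩
    · obtain ⟨v, hv, hvy⟩ := hS y
      exact ⟨Sum.inl v, ⟨v, hv, rfl⟩, join_adj_lr G₁ G₂ v x, (join_adj_ll G₁ G₂ v y).mpr hvy⟩
    · obtain ⟨a⟩ := ‹Nonempty V₁›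
      obtain ⟨v, hv, _⟩ := hS a
      exact ⟨Sum.inl v, ⟨v, hv, rfl⟩, join_adj_lr G₁ G₂ v x, join_adj_lr G₁ G₂ v y⟩
end

section
/- Let G = (C ∪ I, E) be a split graph with clique C and independent set I, with minimum degree δ(G) ≥ 2, |C| ≥ 3, and γ_{×2}(G) ≥ 3. Then γ_m(G) = γ_{×2}(G), i.e., the minimum size of a 1-uniform edge monitoring set equals the minimum size of a double dominating set. -/
/-- `S` is a double dominating set of `G`: the closed neighborhood of every vertex
contains at least two vertices of `S`. -/
def doubleDomSet {V : Type*} (G : SimpleGraph V) (S : Set V) : Prop :=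
  ∀ x : V, 2 ≤ (insert x (G.neighborSet x) ∩ S).ncard

/-!
Without isolated vertices every monitoring set double dominates: if `v ∈ S` monitors an edge
at `x` and `w ∈ S` monitors the edge `xv`, then `v ≠ w` both lie in `N[x]`.

Conversely, a double dominating set `S` of a split graph moves into the clique `C` without
growing: each vertex `x ∈ S ∩ I` is replaced by a neighbour, chosen outside `S` when possible.
Every vertex of `I` keeps two neighbours in the new set, which therefore monitors all edges
between `C` and `I`; padding it inside `C` to three vertices (possible since `|C|, |S| ≥ 3`)
gives every clique edge a third, monitoring vertex.
-/

namespace SimpleGraph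

section

variable {V : Type*} {G : SimpleGraph V} {C : Set V}

theorem neighborSet_subset_of_isIndepSet_compl (hCc : G.IsIndepSet Cᶜ) {x : V} (hx : x ∉ C) :
    G.neighborSet x ⊆ C := by
  intro y hxy
  by_contra hy
  exact hCc hx hy (G.ne_of_adj hxy) hxy

theorem exists_mem_adj_adj_of_two_le_ncard_neighborSet_inter (hC : G.IsClique C)
    {T : Set V} (hTC : T ⊆ C) {x y : V} (hx : x ∈ C) (hy : 2 ≤ (G.neighborSet y ∩ T).ncard) :
    ∃ v ∈ T, G.Adj v x ∧ G.Adj v y := by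
  obtain ⟨v, ⟨hyv, hvT⟩, hvx⟩ := Set.exists_ne_of_one_lt_ncard hy x
  exact ⟨v, hvT, hC (hTC hvT) hx hvx, hyv.symm⟩

end

variable {V : Type*} [Finite V] (G : SimpleGraph V)

theorem doubleDomSet_of_edgeMonitoringSet (hG : ∀ v, (G.neighborSet v).Nonempty) {S : Set V}
    (hS : edgeMonitoringSet G S) : doubleDomSet G S := by
  intro x
  obtain ⟨a, hxa⟩ := hG x
  obtain ⟨v, hvS, hvx, -⟩ := hS x a hxa
  obtain ⟨w, hwS, hwx, hwv⟩ := hS x v hvx.symm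
  exact (Set.one_lt_ncard (Set.toFinite _)).2
    ⟨v, ⟨Set.mem_insert_of_mem _ hvx.symm, hvS⟩, w, ⟨Set.mem_insert_of_mem _ hwx.symm, hwS⟩,
      (G.ne_of_adj hwv).symm⟩

theorem exists_adj_two_le_ncard_neighborSet_inter_insert {S : Set V} (hS : doubleDomSet G S)
    {x : V} (hx : 2 ≤ (G.neighborSet x).ncard) :
    ∃ y, G.Adj x y ∧ 2 ≤ (G.neighborSet x ∩ insert y S).ncard := by
  by_cases hNS : G.neighborSet x ⊆ S
  · obtain ⟨y, hxy⟩ := Set.nonempty_of_ncard_ne_zero (by omega : (G.neighborSet x).ncard ≠ 0)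
    refine ⟨y, hxy, ?_⟩
    rwa [Set.inter_eq_left.2 (hNS.trans (Set.subset_insert y S))]
  · obtain ⟨y, hxy, hyS⟩ := Set.not_subset.1 hNS
    obtain ⟨v, ⟨hvNx, hvS⟩, hvx⟩ := Set.exists_ne_of_one_lt_ncard (hS x) x
    have hxv : G.Adj x v := (Set.mem_insert_iff.1 hvNx).resolve_left hvx
    exact ⟨y, hxy, (Set.one_lt_ncard (Set.toFinite _)).2
      ⟨v, Set.mem_inter hxv (Set.mem_insert_of_mem _ hvS),
        y, Set.mem_inter hxy (Set.mem_insert y S), fun hvy => hyS (hvy ▸ hvS)⟩⟩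

variable {G} {C : Set V}

theorem exists_subset_two_le_ncard_neighborSet_inter_of_doubleDomSet
    (hCc : G.IsIndepSet Cᶜ) (hdeg : ∀ v, 2 ≤ (G.neighborSet v).ncard) {S : Set V}
    (hS : doubleDomSet G S) :
    ∃ T ⊆ C, T.ncard ≤ S.ncard ∧ ∀ x ∉ C, 2 ≤ (G.neighborSet x ∩ T).ncard := by
  choose f hf hf2 using fun x => G.exists_adj_two_le_ncard_neighborSet_inter_insert hS (hdeg x)
  have hfC : ∀ x ∉ C, f x ∈ C := fun x hx => neighborSet_subset_of_isIndepSet_compl hCc hx (hf x)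
  refine ⟨S ∩ C ∪ f '' (S \ C), Set.union_subset Set.inter_subset_right ?_, ?_, ?_⟩
  · rintro _ ⟨x, hx, rfl⟩
    exact hfC x hx.2
  · calc (S ∩ C ∪ f '' (S \ C)).ncard ≤ (S ∩ C).ncard + (f '' (S \ C)).ncard :=
          Set.ncard_union_le _ _
      _ ≤ (S ∩ C).ncard + (S \ C).ncard :=
        Nat.add_le_add_left (Set.ncard_image_le (Set.toFinite _)) _
      _ = S.ncard := Set.ncard_inter_add_ncard_sdiff_eq_ncard S C
  · intro x hx
    have hNx := neighborSet_subset_of_isIndepSet_compl hCc hx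
    have hNS : G.neighborSet x ∩ S ⊆ G.neighborSet x ∩ (S ∩ C ∪ f '' (S \ C)) :=
      fun v hv => ⟨hv.1, .inl ⟨hv.2, hNx hv.1⟩⟩
    by_cases hxS : x ∈ S
    · refine (hf2 x).trans (Set.ncard_le_ncard ?_)
      rintro v ⟨hxv, rfl | hvS⟩
      · exact ⟨hxv, .inr ⟨x, ⟨hxS, hx⟩, rfl⟩⟩
      · exact hNS ⟨hxv, hvS⟩
    · have := hS x
      rw [Set.insert_inter_of_notMem hxS] at this
      exact this.trans (Set.ncard_le_ncard hNS)

theorem edgeMonitoringSet_of_subset_clique (hC : G.IsClique C) (hCc : G.IsIndepSet Cᶜ)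
    {T : Set V} (hTC : T ⊆ C) (hT : 3 ≤ T.ncard)
    (hTI : ∀ x ∉ C, 2 ≤ (G.neighborSet x ∩ T).ncard) : edgeMonitoringSet G T := by
  intro x y hxy
  by_cases hx : x ∈ C <;> by_cases hy : y ∈ C
  · obtain ⟨z, ⟨hzT, hzxy⟩⟩ : (T \ {x, y}).Nonempty := by
      refine Set.nonempty_of_ncard_ne_zero (ne_of_gt (lt_of_lt_of_le ?_ (Set.le_ncard_sdiff _ _)))
      rw [Set.ncard_pair (G.ne_of_adj hxy)]
      omega
    simp only [Set.mem_insert_iff, Set.mem_singleton_iff, not_or] at hzxy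
    exact ⟨z, hzT, hC (hTC hzT) hx hzxy.1, hC (hTC hzT) hy hzxy.2⟩
  · exact exists_mem_adj_adj_of_two_le_ncard_neighborSet_inter hC hTC hx (hTI y hy)
  · obtain ⟨v, hvT, hvy, hvx⟩ :=
      exists_mem_adj_adj_of_two_le_ncard_neighborSet_inter hC hTC hy (hTI x hx)
    exact ⟨v, hvT, hvx, hvy⟩
  · exact absurd hxy (hCc hx hy (G.ne_of_adj hxy))

theorem exists_edgeMonitoringSet_ncard_le_of_doubleDomSet (hC : G.IsClique C)
    (hCc : G.IsIndepSet Cᶜ) (hdeg : ∀ v, 2 ≤ (G.neighborSet v).ncard) (hC3 : 3 ≤ C.ncard)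
    {S : Set V} (hS : doubleDomSet G S) (hS3 : 3 ≤ S.ncard) :
    ∃ T, edgeMonitoringSet G T ∧ T.ncard ≤ S.ncard := by
  obtain ⟨T₀, hT₀C, hT₀S, hT₀I⟩ :=
    exists_subset_two_le_ncard_neighborSet_inter_of_doubleDomSet hCc hdeg hS
  obtain ⟨T, hT₀T, hTC, hTcard⟩ := Set.exists_subsuperset_card_eq hT₀C
    (le_max_left T₀.ncard 3) (max_le (Set.ncard_le_ncard hT₀C) hC3)
  refine ⟨T, edgeMonitoringSet_of_subset_clique hC hCc hTC (hTcard ▸ le_max_right _ _)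
    fun x hx => (hT₀I x hx).trans (Set.ncard_le_ncard (Set.inter_subset_inter_right _ hT₀T)), ?_⟩
  rw [hTcard]
  exact max_le hT₀S hS3

end SimpleGraph

open SimpleGraph in
theorem stmt10 {V : Type*} [Fintype V] (G : SimpleGraph V) (C I : Set V)
    (hcover : C ∪ I = Set.univ) (hdisj : C ∩ I = ∅)
    (hclique : G.IsClique C)
    (hindep : I.Pairwise (fun x y => ¬ G.Adj x y))
    (hdeg : ∀ v : V, 2 ≤ (G.neighborSet v).ncard)
    (hC3 : 3 ≤ C.ncard)
    (hdd3 : 3 ≤ sInf {n : ℕ | ∃ S : Set V, doubleDomSet G S ∧ S.ncard = n}) :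
    sInf {n : ℕ | ∃ S : Set V, edgeMonitoringSet G S ∧ S.ncard = n}
      = sInf {n : ℕ | ∃ S : Set V, doubleDomSet G S ∧ S.ncard = n} := by
  obtain rfl : Cᶜ = I := compl_unique hdisj hcover
  set em := {n : ℕ | ∃ S : Set V, edgeMonitoringSet G S ∧ S.ncard = n}
  set dd := {n : ℕ | ∃ S : Set V, doubleDomSet G S ∧ S.ncard = n}
  obtain ⟨S, hS, hScard⟩ : sInf dd ∈ dd := Nat.sInf_mem (Nat.nonempty_of_pos_sInf (by omega))
  obtain ⟨T, hT, hTS⟩ :=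
    exists_edgeMonitoringSet_ncard_le_of_doubleDomSet hclique hindep hdeg hC3 hS (hScard ▸ hdd3)
  obtain ⟨M, hM, hMcard⟩ : sInf em ∈ em := Nat.sInf_mem ⟨T.ncard, T, hT, rfl⟩
  have hG : ∀ v, (G.neighborSet v).Nonempty :=
    fun v => Set.nonempty_of_ncard_ne_zero (by have := hdeg v; omega)
  apply le_antisymm
  · calc sInf em ≤ T.ncard := Nat.sInf_le ⟨T, hT, rfl⟩
      _ ≤ S.ncard := hTS
      _ = sInf dd := hScard
  · calc sInf dd ≤ M.ncard := Nat.sInf_le ⟨M, G.doubleDomSet_of_edgeMonitoringSet hG hM, rfl⟩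
      _ = sInf em := hMcard
end

section
/- Let G = (C ∪ I, E) be a split graph with clique C and independent set I, with minimum degree δ(G) ≥ 2 and |C| ≥ 3. Then there exists a minimum double dominating set S of G with S ⊆ C, and there exists a minimum 1-uniform edge monitoring set S' of G with S' ⊆ C. -/
section Aux

variable {V : Type*} [Fintype V] {G : SimpleGraph V} {C I : Set V}

lemma aux_two_le {s : Set V} (h : 2 ≤ s.ncard) : ∃ a ∈ s, ∃ b ∈ s, a ≠ b :=
  (Set.one_lt_ncard (Set.toFinite s)).1 h

lemma aux_le_two {s : Set V} {a b : V} (ha : a ∈ s) (hb : b ∈ s) (hab : a ≠ b) :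
    2 ≤ s.ncard :=
  (Set.one_lt_ncard (Set.toFinite s)).2 ⟨a, ha, b, hb, hab⟩

lemma aux_min {P : Set V → Prop}
    (hred : ∀ T : Set V, P T → ∃ S : Set V, S ⊆ C ∧ P S ∧ S.ncard ≤ T.ncard)
    (hex : ∃ S : Set V, S ⊆ C ∧ P S) :
    ∃ S : Set V, P S ∧ S ⊆ C ∧ ∀ T, P T → S.ncard ≤ T.ncard := by
  have hAne : {n | ∃ S : Set V, S ⊆ C ∧ P S ∧ S.ncard = n}.Nonempty := by
    obtain ⟨S, h1, h2⟩ := hex; exact ⟨S.ncard, S, h1, h2, rfl⟩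
  obtain ⟨S, hSC, hPS, hcard⟩ := Nat.sInf_mem hAne
  refine ⟨S, hPS, hSC, fun T hT => ?_⟩
  obtain ⟨S', h1, h2, h3⟩ := hred T hT
  have : S.ncard ≤ S'.ncard := by
    rw [hcard]; exact Nat.sInf_le ⟨S', h1, h2, rfl⟩
  exact this.trans h3

lemma aux_reduce {P : Set V → Prop}
    (hcover : C ∪ I = Set.univ)
    (hstep : ∀ T v, P T → v ∈ T → v ∈ I →
      ∃ T', P T' ∧ T'.ncard ≤ T.ncard ∧ (T' ∩ I).ncard < (T ∩ I).ncard) :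
    ∀ T : Set V, P T → ∃ S : Set V, S ⊆ C ∧ P S ∧ S.ncard ≤ T.ncard := by
  suffices H : ∀ (n : ℕ) (T : Set V), (T ∩ I).ncard = n → P T →
      ∃ S : Set V, S ⊆ C ∧ P S ∧ S.ncard ≤ T.ncard from fun T hT => H _ T rfl hT
  intro n
  induction n using Nat.strong_induction_on with
  | _ n IH =>
    intro T hn hT
    rcases Set.eq_empty_or_nonempty (T ∩ I) with he | ⟨v, hvT, hvI⟩
    · refine ⟨T, fun x hx => ?_, hT, le_rfl⟩
      rcases (by rw [hcover]; trivial : x ∈ C ∪ I) with h | h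
      · exact h
      · exact absurd (show x ∈ T ∩ I from ⟨hx, h⟩) (by rw [he]; exact Set.notMem_empty x)
    · obtain ⟨T', hPT', hle, hlt⟩ := hstep T v hT hvT hvI
      obtain ⟨S, h1, h2, h3⟩ := IH _ (hn ▸ hlt) T' rfl hPT'
      exact ⟨S, h1, h2, h3.trans hle⟩

end Aux

section Graph

variable {V : Type*} [Fintype V] {G : SimpleGraph V} {C I : Set V}

lemma aux_memCI (hcover : C ∪ I = Set.univ) (x : V) : x ∈ C ∨ x ∈ I := by
  have : x ∈ C ∪ I := by rw [hcover]; trivial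
  exact this

lemma aux_notI (hdisj : C ∩ I = ∅) {x : V} (hx : x ∈ C) : x ∉ I := by
  intro h; have : x ∈ C ∩ I := ⟨hx, h⟩; rw [hdisj] at this; exact this

lemma aux_nbrI (hcover : C ∪ I = Set.univ)
    (hindep : I.Pairwise (fun x y => ¬ G.Adj x y)) {x : V} (hx : x ∈ I) :
    G.neighborSet x ⊆ C := by
  intro y hy
  rcases aux_memCI hcover y with h | h
  · exact h
  · exact absurd hy (hindep hx h (G.ne_of_adj hy))

lemma aux_cliqueSub (hclique : G.IsClique C) {x : V} (hx : x ∈ C) :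
    C ⊆ insert x (G.neighborSet x) := by
  intro c hc
  rcases eq_or_ne c x with rfl | h
  · exact Set.mem_insert _ _
  · exact Set.mem_insert_of_mem _ (hclique hx hc h.symm)

lemma aux_vnotN (hindep : I.Pairwise (fun x y => ¬ G.Adj x y)) {x v : V}
    (hx : x ∈ I) (hv : v ∈ I) (hxv : x ≠ v) : v ∉ insert x (G.neighborSet x) := by
  intro h
  rcases h with h | h
  · exact hxv h.symm
  · exact hindep hx hv hxv h

lemma aux_interI (hdisj : C ∩ I = ∅) {T : Set V} {v w : V} (hv : v ∈ T) (hvI : v ∈ I)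
    (hw : w ∈ C) : ((insert w (T \ {v})) ∩ I).ncard < (T ∩ I).ncard := by
  have he : (insert w (T \ {v})) ∩ I = (T ∩ I) \ {v} := by
    ext a
    simp only [Set.mem_inter_iff, Set.mem_insert_iff, Set.mem_diff, Set.mem_singleton_iff]
    constructor
    · rintro ⟨h | ⟨h1, h2⟩, hI⟩
      · exact absurd hI (h ▸ aux_notI hdisj hw)
      · exact ⟨⟨h1, hI⟩, h2⟩
    · rintro ⟨⟨h1, hI⟩, h2⟩; exact ⟨Or.inr ⟨h1, h2⟩, hI⟩
  rw [he]
  exact Set.ncard_diff_singleton_lt_of_mem ⟨hv, hvI⟩ (Set.toFinite _)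

lemma aux_interI' (hdisj : C ∩ I = ∅) {T : Set V} {v : V} (hv : v ∈ T) (hvI : v ∈ I) :
    ((T \ {v}) ∩ I).ncard < (T ∩ I).ncard := by
  have he : (T \ {v}) ∩ I = (T ∩ I) \ {v} := by
    ext a
    simp only [Set.mem_inter_iff, Set.mem_diff, Set.mem_singleton_iff]
    tauto
  rw [he]
  exact Set.ncard_diff_singleton_lt_of_mem ⟨hv, hvI⟩ (Set.toFinite _)

lemma aux_cardins {T : Set V} {v w : V} (hv : v ∈ T) :
    (insert w (T \ {v})).ncard ≤ T.ncard := by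
  calc (insert w (T \ {v})).ncard ≤ (T \ {v}).ncard + 1 := Set.ncard_insert_le _ _
    _ = T.ncard := Set.ncard_diff_singleton_add_one hv (Set.toFinite _)

lemma dd_step (hcover : C ∪ I = Set.univ) (hdisj : C ∩ I = ∅)
    (hclique : G.IsClique C) (hindep : I.Pairwise (fun x y => ¬ G.Adj x y))
    (hdeg : ∀ v : V, 2 ≤ (G.neighborSet v).ncard) :
    ∀ T v, doubleDomSet G T → v ∈ T → v ∈ I →
      ∃ T', doubleDomSet G T' ∧ T'.ncard ≤ T.ncard ∧ (T' ∩ I).ncard < (T ∩ I).ncard := by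
  intro T v hT hvT hvI
  by_cases hw : ∃ w ∈ G.neighborSet v, w ∉ T
  · obtain ⟨w, hwN, hwT⟩ := hw
    have hwC : w ∈ C := aux_nbrI hcover hindep hvI hwN
    refine ⟨insert w (T \ {v}), ?_, aux_cardins hvT, aux_interI hdisj hvT hvI hwC⟩
    intro x
    obtain ⟨a, ⟨haN, haT⟩, b, ⟨hbN, hbT⟩, hab⟩ := aux_two_le (hT x)
    have hsub : T \ {v} ⊆ insert w (T \ {v}) := Set.subset_insert _ _
    by_cases hxI : x ∈ I ∧ x ≠ v
    · have hvN := aux_vnotN hindep hxI.1 hvI hxI.2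
      refine aux_le_two (s := insert x (G.neighborSet x) ∩ insert w (T \ {v}))
        ⟨haN, hsub ⟨haT, fun h => hvN (h ▸ haN)⟩⟩
        ⟨hbN, hsub ⟨hbT, fun h => hvN (h ▸ hbN)⟩⟩ hab
    · -- here x ∈ C or x = v; in both cases w ∈ insert x (N x)
      have hwNx : w ∈ insert x (G.neighborSet x) := by
        rcases eq_or_ne x v with rfl | hxv
        · exact Set.mem_insert_of_mem _ hwN
        · have hxC : x ∈ C := by
            rcases aux_memCI hcover x with h | h
            · exact h
            · exact absurd ⟨h, hxv⟩ hxI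
          exact aux_cliqueSub hclique hxC hwC
      rcases eq_or_ne a v with rfl | hav
      · have hbv : b ≠ a := hab.symm
        exact aux_le_two ⟨hwNx, Set.mem_insert _ _⟩
          ⟨hbN, hsub ⟨hbT, hbv⟩⟩ (by rintro rfl; exact hwT hbT)
      · rcases eq_or_ne b v with rfl | hbv
        · exact aux_le_two ⟨hwNx, Set.mem_insert _ _⟩
            ⟨haN, hsub ⟨haT, hav⟩⟩ (by rintro rfl; exact hwT haT)
        · exact aux_le_two ⟨haN, hsub ⟨haT, hav⟩⟩ ⟨hbN, hsub ⟨hbT, hbv⟩⟩ hab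
  · push_neg at hw
    refine ⟨T \ {v}, ?_, (Set.ncard_diff_singleton_lt_of_mem hvT (Set.toFinite _)).le,
      aux_interI' hdisj hvT hvI⟩
    intro x
    obtain ⟨a, haN, b, hbN, hab⟩ := aux_two_le (hdeg v)
    have haC : a ∈ C := aux_nbrI hcover hindep hvI haN
    have hbC : b ∈ C := aux_nbrI hcover hindep hvI hbN
    have haT' : a ∈ T \ {v} := ⟨hw a haN, fun h => (aux_notI hdisj haC) (h ▸ hvI)⟩
    have hbT' : b ∈ T \ {v} := ⟨hw b hbN, fun h => (aux_notI hdisj hbC) (h ▸ hvI)⟩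
    by_cases hxI : x ∈ I ∧ x ≠ v
    · have hvN := aux_vnotN hindep hxI.1 hvI hxI.2
      obtain ⟨a', ⟨haN', haT⟩, b', ⟨hbN', hbT⟩, hab'⟩ := aux_two_le (hT x)
      exact aux_le_two ⟨haN', haT, fun h => hvN (h ▸ haN')⟩
        ⟨hbN', hbT, fun h => hvN (h ▸ hbN')⟩ hab'
    · have hNx : G.neighborSet v ⊆ insert x (G.neighborSet x) := by
        rcases eq_or_ne x v with rfl | hxv
        · exact Set.subset_insert _ _
        · have hxC : x ∈ C := by
            rcases aux_memCI hcover x with h | h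
            · exact h
            · exact absurd ⟨h, hxv⟩ hxI
          exact (aux_nbrI hcover hindep hvI).trans (aux_cliqueSub hclique hxC)
      exact aux_le_two ⟨hNx haN, haT'⟩ ⟨hNx hbN, hbT'⟩ hab

lemma aux_third (hC3 : 3 ≤ C.ncard) (x y : V) : ∃ p ∈ C, p ≠ x ∧ p ≠ y := by
  by_contra h
  push_neg at h
  have hsub : C ⊆ {x, y} := by
    intro p hp
    rcases eq_or_ne p x with rfl | h1
    · exact Set.mem_insert _ _
    · rcases eq_or_ne p y with rfl | h2
      · exact Set.mem_insert_of_mem _ rfl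
      · exact absurd (h p hp h1) h2
  have : C.ncard ≤ 2 := by
    calc C.ncard ≤ ({x, y} : Set V).ncard := Set.ncard_le_ncard hsub (Set.toFinite _)
      _ ≤ ({y} : Set V).ncard + 1 := Set.ncard_insert_le _ _
      _ ≤ 2 := by rw [Set.ncard_singleton]
  omega

lemma dd_C (hcover : C ∪ I = Set.univ)
    (hclique : G.IsClique C) (hindep : I.Pairwise (fun x y => ¬ G.Adj x y))
    (hdeg : ∀ v : V, 2 ≤ (G.neighborSet v).ncard) (hC3 : 3 ≤ C.ncard) :
    doubleDomSet G C := by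
  intro x
  rcases aux_memCI hcover x with hx | hx
  · obtain ⟨a, haC, b, hbC, hab⟩ := aux_two_le (by omega : 2 ≤ C.ncard)
    exact aux_le_two ⟨aux_cliqueSub hclique hx haC, haC⟩
      ⟨aux_cliqueSub hclique hx hbC, hbC⟩ hab
  · obtain ⟨a, haN, b, hbN, hab⟩ := aux_two_le (hdeg x)
    exact aux_le_two ⟨Set.mem_insert_of_mem _ haN, aux_nbrI hcover hindep hx haN⟩
      ⟨Set.mem_insert_of_mem _ hbN, aux_nbrI hcover hindep hx hbN⟩ hab

lemma em_C (hcover : C ∪ I = Set.univ)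
    (hclique : G.IsClique C) (hindep : I.Pairwise (fun x y => ¬ G.Adj x y))
    (hdeg : ∀ v : V, 2 ≤ (G.neighborSet v).ncard) (hC3 : 3 ≤ C.ncard) :
    edgeMonitoringSet G C := by
  intro x y hxy
  rcases aux_memCI hcover x with hx | hx
  · rcases aux_memCI hcover y with hy | hy
    · obtain ⟨p, hpC, hpx, hpy⟩ := aux_third hC3 x y
      exact ⟨p, hpC, hclique hpC hx hpx, hclique hpC hy hpy⟩
    · -- y ∈ I : pick p ∈ N(y), p ≠ x
      obtain ⟨p, hpN, hpx⟩ := Set.exists_ne_of_one_lt_ncard (hdeg y) x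
      have hpC : p ∈ C := aux_nbrI hcover hindep hy hpN
      exact ⟨p, hpC, hclique hpC hx hpx, (SimpleGraph.mem_neighborSet _ _ _ |>.1 hpN).symm⟩
  · rcases aux_memCI hcover y with hy | hy
    · obtain ⟨p, hpN, hpy⟩ := Set.exists_ne_of_one_lt_ncard (hdeg x) y
      have hpC : p ∈ C := aux_nbrI hcover hindep hx hpN
      exact ⟨p, hpC, (SimpleGraph.mem_neighborSet _ _ _ |>.1 hpN).symm, hclique hpC hy hpy⟩
    · exact absurd hxy (hindep hx hy (G.ne_of_adj hxy))

lemma em_step (hcover : C ∪ I = Set.univ) (hdisj : C ∩ I = ∅)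
    (hclique : G.IsClique C) (hindep : I.Pairwise (fun x y => ¬ G.Adj x y))
    (hdeg : ∀ v : V, 2 ≤ (G.neighborSet v).ncard) (hC3 : 3 ≤ C.ncard) :
    ∀ T v, edgeMonitoringSet G T → v ∈ T → v ∈ I →
      ∃ T', edgeMonitoringSet G T' ∧ T'.ncard ≤ T.ncard ∧ (T' ∩ I).ncard < (T ∩ I).ncard := by
  intro T v hT hvT hvI
  by_cases hw : ∃ w ∈ C, w ∉ G.neighborSet v
  · obtain ⟨w, hwC, hwN⟩ := hw
    refine ⟨insert w (T \ {v}), ?_, aux_cardins hvT, aux_interI hdisj hvT hvI hwC⟩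
    intro x y hxy
    obtain ⟨u, huT, hux, huy⟩ := hT x y hxy
    rcases eq_or_ne u v with huv | huv
    · rw [huv] at hux huy
      have hxN : x ∈ G.neighborSet v := hux
      have hyN : y ∈ G.neighborSet v := huy
      have hxC : x ∈ C := aux_nbrI hcover hindep hvI hxN
      have hyC : y ∈ C := aux_nbrI hcover hindep hvI hyN
      have hwx : w ≠ x := fun h => hwN (h ▸ hxN)
      have hwy : w ≠ y := fun h => hwN (h ▸ hyN)
      exact ⟨w, Set.mem_insert _ _, hclique hwC hxC hwx, hclique hwC hyC hwy⟩
    · exact ⟨u, Set.mem_insert_of_mem _ ⟨huT, huv⟩, hux, huy⟩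
  · push_neg at hw
    -- every vertex of C is a neighbor of v; get two distinct elements of T ∩ C
    have key : ∀ c ∈ C, ∃ u, u ∈ T ∧ u ∈ C ∧ u ≠ c := by
      intro c hc
      obtain ⟨u, huT, huv, huc⟩ := hT v c (hw c hc)
      have huC : u ∈ C := aux_nbrI hcover hindep hvI huv.symm
      exact ⟨u, huT, huC, G.ne_of_adj huc⟩
    have hCne : C.Nonempty := by
      rcases Set.eq_empty_or_nonempty C with h | h
      · rw [h, Set.ncard_empty] at hC3; omega
      · exact h
    obtain ⟨c1, hc1⟩ := hCne
    obtain ⟨u1, hu1T, hu1C, _⟩ := key c1 hc1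
    obtain ⟨u2, hu2T, hu2C, hu21⟩ := key u1 hu1C
    by_cases hz : ∃ z ∈ C, z ∉ T
    · obtain ⟨z, hzC, hzT⟩ := hz
      refine ⟨insert z (T \ {v}), ?_, aux_cardins hvT, aux_interI hdisj hvT hvI hzC⟩
      intro x y hxy
      obtain ⟨u, huT, hux, huy⟩ := hT x y hxy
      rcases eq_or_ne u v with huv | huv
      · rw [huv] at hux huy
        have hxC : x ∈ C := aux_nbrI hcover hindep hvI hux
        have hyC : y ∈ C := aux_nbrI hcover hindep hvI huy
        have hu1v : u1 ≠ v := fun h => aux_notI hdisj hu1C (h ▸ hvI)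
        have hu2v : u2 ≠ v := fun h => aux_notI hdisj hu2C (h ▸ hvI)
        have hmem1 : u1 ∈ insert z (T \ {v}) := Set.mem_insert_of_mem _ ⟨hu1T, hu1v⟩
        have hmem2 : u2 ∈ insert z (T \ {v}) := Set.mem_insert_of_mem _ ⟨hu2T, hu2v⟩
        have : ∃ p, p ∈ insert z (T \ {v}) ∧ p ∈ C ∧ p ≠ x ∧ p ≠ y := by
          by_cases h1 : u1 ≠ x ∧ u1 ≠ y
          · exact ⟨u1, hmem1, hu1C, h1⟩
          · by_cases h2 : u2 ≠ x ∧ u2 ≠ y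
            · exact ⟨u2, hmem2, hu2C, h2⟩
            · have hz1 : z ≠ u1 := fun h => hzT (h ▸ hu1T)
              have hz2 : z ≠ u2 := fun h => hzT (h ▸ hu2T)
              rw [not_and_or, not_not, not_not] at h1 h2
              refine ⟨z, Set.mem_insert _ _, hzC, ?_⟩
              rcases h1 with h1 | h1 <;> rcases h2 with h2 | h2
              · exact absurd (h2.trans h1.symm) hu21
              · exact ⟨h1 ▸ hz1, h2 ▸ hz2⟩
              · exact ⟨h2 ▸ hz2, h1 ▸ hz1⟩
              · exact absurd (h2.trans h1.symm) hu21
        obtain ⟨p, hp1, hpC, hpx, hpy⟩ := this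
        exact ⟨p, hp1, hclique hpC hxC hpx, hclique hpC hyC hpy⟩
      · exact ⟨u, Set.mem_insert_of_mem _ ⟨huT, huv⟩, hux, huy⟩
    · push_neg at hz
      refine ⟨T \ {v}, ?_, (Set.ncard_diff_singleton_lt_of_mem hvT (Set.toFinite _)).le,
        aux_interI' hdisj hvT hvI⟩
      intro x y hxy
      obtain ⟨u, huT, hux, huy⟩ := hT x y hxy
      rcases eq_or_ne u v with huv | huv
      · rw [huv] at hux huy
        have hxC : x ∈ C := aux_nbrI hcover hindep hvI hux
        have hyC : y ∈ C := aux_nbrI hcover hindep hvI huy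
        obtain ⟨p, hpC, hpx, hpy⟩ := aux_third hC3 x y
        have hpv : p ≠ v := fun h => aux_notI hdisj hpC (h ▸ hvI)
        exact ⟨p, ⟨hz p hpC, hpv⟩, hclique hpC hxC hpx, hclique hpC hyC hpy⟩
      · exact ⟨u, ⟨huT, huv⟩, hux, huy⟩

end Graph

theorem stmt11 {V : Type*} [Fintype V] (G : SimpleGraph V) (C I : Set V)
    (hcover : C ∪ I = Set.univ) (hdisj : C ∩ I = ∅)
    (hclique : G.IsClique C)
    (hindep : I.Pairwise (fun x y => ¬ G.Adj x y))
    (hdeg : ∀ v : V, 2 ≤ (G.neighborSet v).ncard)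
    (hC3 : 3 ≤ C.ncard) :
    (∃ S : Set V, doubleDomSet G S ∧ S ⊆ C ∧
      ∀ T : Set V, doubleDomSet G T → S.ncard ≤ T.ncard) ∧
    (∃ S' : Set V, edgeMonitoringSet G S' ∧ S' ⊆ C ∧
      ∀ T : Set V, edgeMonitoringSet G T → S'.ncard ≤ T.ncard) := by
  constructor
  · exact aux_min (aux_reduce hcover (dd_step hcover hdisj hclique hindep hdeg))
      ⟨C, subset_rfl, dd_C hcover hclique hindep hdeg hC3⟩
  · exact aux_min (aux_reduce hcover (em_step hcover hdisj hclique hindep hdeg hC3))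
      ⟨C, subset_rfl, em_C hcover hclique hindep hdeg hC3⟩
end

section
/- Let G be any graph and let S be a 1-uniform edge monitoring set of G. If G has minimum degree at least 2 (in particular every vertex has at least one neighbor), then S is a double dominating set of G, i.e., |N[x] ∩ S| ≥ 2 for every vertex x. -/
theorem stmt13 {V : Type*} [Fintype V] (G : SimpleGraph V) (S : Set V)
    (hS : edgeMonitoringSet G S)
    (hdeg : ∀ v : V, 2 ≤ (G.neighborSet v).ncard) :
    ∀ x : V, 2 ≤ (insert x (G.neighborSet x) ∩ S).ncard := by
  intro x
  have hne : (G.neighborSet x).Nonempty := by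
    rw [← Set.ncard_pos (Set.toFinite _)]
    exact lt_of_lt_of_le (by norm_num) (hdeg x)
  obtain ⟨y, hy⟩ := hne
  rw [SimpleGraph.mem_neighborSet] at hy
  obtain ⟨v, hvS, hvx, hvy⟩ := hS x y hy
  obtain ⟨w, hwS, hwv, hwx⟩ := hS v x hvx
  have hvw : v ≠ w := fun h => G.irrefl (h ▸ hwv)
  have hsub : ({v, w} : Set V) ⊆ insert x (G.neighborSet x) ∩ S := by
    intro z hz
    rcases hz with h | h <;> subst h
    · exact ⟨Set.mem_insert_of_mem _ hvx.symm, hvS⟩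
    · exact ⟨Set.mem_insert_of_mem _ hwx.symm, hwS⟩
  calc 2 = ({v, w} : Set V).ncard := (Set.ncard_pair hvw).symm
    _ ≤ _ := Set.ncard_le_ncard hsub (Set.toFinite _)
end

section
/- Let G be a connected graph, c : E → ℕ, and let k ≥ 1. Suppose c(e) ≤ k for all e, and let G* be the graph on vertex set V* (obtained from V by removing all endpoints of edges e with c(e) = k) with edge set E* = { uv ∈ E : c(uv) = k − 1 and u, v ∈ V* }. Then a set S ⊆ V of size exactly k is a monitoring set of the complete graph on V with weights c (setting c = 0 on non-edges of G) if and only if S is an independent set of G* of size k. -/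
open scoped Classical

/-- `S` is a monitoring set of `(G, c)`: every edge `{x, y}` of `G` is monitored by at least
`c {x, y}` vertices of `S`, where a vertex `v` monitors `{x, y}` if `v` is adjacent to both. -/
def monitoringSet {V : Type*} (G : SimpleGraph V) (c : Sym2 V → ℕ) (S : Set V) : Prop :=
  ∀ x y, G.Adj x y → c s(x, y) ≤ {v ∈ S | G.Adj v x ∧ G.Adj v y}.ncard

/-- The set `V*`: vertices of `G` that are not endpoints of an edge `e` with `c e = k`. -/
def Vstar {V : Type*} (G : SimpleGraph V) (c : Sym2 V → ℕ) (k : ℕ) : Set V :=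
  {v : V | ∀ x, G.Adj v x → c s(v, x) ≠ k}

/-- The graph `G*` with edges `uv ∈ E` such that `c uv = k - 1` and `u, v ∈ V*`. -/
def Gstar {V : Type*} (G : SimpleGraph V) (c : Sym2 V → ℕ) (k : ℕ) : SimpleGraph V :=
  SimpleGraph.fromRel (fun u v =>
    G.Adj u v ∧ c s(u, v) = k - 1 ∧ u ∈ Vstar G c k ∧ v ∈ Vstar G c k)

/-! In the complete graph every vertex outside `{x, y}` monitors `{x, y}`, so for `|S| = k` the
edge `xy` is monitored iff `c(xy) + |S ∩ {x, y}| ≤ k`. Since `c(xy) ≤ k`, this fails exactly when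
`c(xy) = k` and an endpoint lies in `S`, or `c(xy) = k - 1` and both endpoints lie in `S`. -/

namespace Set

theorem ncard_inter_pair {α : Type*} (S : Set α) {x y : α} (hxy : x ≠ y) :
    (S ∩ {x, y}).ncard = (if x ∈ S then 1 else 0) + (if y ∈ S then 1 else 0) := by
  by_cases hx : x ∈ S <;> by_cases hy : y ∈ S <;>
    simp [inter_insert_of_mem, inter_insert_of_notMem, hx, hy, hxy]

end Set

theorem sep_top_adj_eq_sdiff_pair {V : Type*} (S : Set V) (x y : V) :
    {v ∈ S | (⊤ : SimpleGraph V).Adj v x ∧ (⊤ : SimpleGraph V).Adj v y} = S \ {x, y} := by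
  ext v
  simp only [Set.mem_ofPred, SimpleGraph.top_adj, Set.mem_sdiff, Set.mem_insert_iff,
    Set.mem_singleton_iff]
  tauto

theorem monitoringSet_top_iff {V : Type*} (G : SimpleGraph V) (c : Sym2 V → ℕ) {S : Set V}
    (hS : S.Finite) :
    monitoringSet (⊤ : SimpleGraph V) (fun e => if e ∈ G.edgeSet then c e else 0) S ↔
      ∀ x y, G.Adj x y → c s(x, y) + (S ∩ {x, y}).ncard ≤ S.ncard := by
  simp only [monitoringSet, sep_top_adj_eq_sdiff_pair]
  refine forall₂_congr fun x y => ⟨fun h hG => ?_, fun h _ => ?_⟩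
  · have := h hG.ne
    rw [if_pos (G.mem_edgeSet.mpr hG)] at this
    have := Set.ncard_inter_add_ncard_sdiff_eq_ncard S {x, y} hS
    omega
  · split_ifs with hG
    · have := h hG
      have := Set.ncard_inter_add_ncard_sdiff_eq_ncard S {x, y} hS
      omega
    · exact Nat.zero_le _

theorem Gstar_adj_iff {V : Type*} (G : SimpleGraph V) (c : Sym2 V → ℕ) (k : ℕ) {u v : V} :
    (Gstar G c k).Adj u v ↔
      G.Adj u v ∧ c s(u, v) = k - 1 ∧ u ∈ Vstar G c k ∧ v ∈ Vstar G c k := by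
  rw [Gstar, SimpleGraph.fromRel_adj, Sym2.eq_swap]
  constructor
  · rintro ⟨-, h | ⟨hG, hc, hv, hu⟩⟩
    · exact h
    · exact ⟨hG.symm, hc, hu, hv⟩
  · intro h
    exact ⟨h.1.ne, Or.inl h⟩

theorem stmt14_general {V : Type*} (G : SimpleGraph V)
    (c : Sym2 V → ℕ) (k : ℕ) (hk : 1 ≤ k)
    (hck : ∀ e ∈ G.edgeSet, c e ≤ k)
    (S : Set V) (hcard : S.ncard = k) :
    monitoringSet (⊤ : SimpleGraph V) (fun e => if e ∈ G.edgeSet then c e else 0) S ↔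
      (S ⊆ Vstar G c k ∧ ∀ u ∈ S, ∀ v ∈ S, ¬ (Gstar G c k).Adj u v) := by
  have hS : S.Finite := Set.finite_of_ncard_pos (by omega)
  rw [monitoringSet_top_iff G c hS, hcard]
  constructor
  · intro h
    have hV : S ⊆ Vstar G c k := fun v hv x hvx hc => by
      have := h v x hvx
      rw [Set.ncard_inter_pair S hvx.ne, if_pos hv] at this
      omega
    refine ⟨hV, fun u hu v hv hadj => ?_⟩
    obtain ⟨hG, hc, -⟩ := (Gstar_adj_iff G c k).mp hadj
    have := h u v hG
    rw [Set.ncard_inter_pair S hG.ne, if_pos hu, if_pos hv] at this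
    omega
  · rintro ⟨hV, hind⟩ x y hG
    have hc := hck _ (G.mem_edgeSet.mpr hG)
    have hx : x ∈ S → c s(x, y) ≠ k := fun hx => hV hx y hG
    have hy : y ∈ S → c s(x, y) ≠ k := fun hy => Sym2.eq_swap ▸ hV hy x hG.symm
    have hxy : x ∈ S → y ∈ S → c s(x, y) ≠ k - 1 := fun hx hy hc' =>
      hind x hx y hy ((Gstar_adj_iff G c k).mpr ⟨hG, hc', hV hx, hV hy⟩)
    rw [Set.ncard_inter_pair S hG.ne]
    split_ifs <;> grind

theorem stmt14 {V : Type*} [Fintype V] (G : SimpleGraph V) (hconn : G.Connected)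
    (c : Sym2 V → ℕ) (k : ℕ) (hk : 1 ≤ k)
    (hck : ∀ e ∈ G.edgeSet, c e ≤ k)
    (S : Set V) (hcard : S.ncard = k) :
    monitoringSet (⊤ : SimpleGraph V) (fun e => if e ∈ G.edgeSet then c e else 0) S ↔
      (S ⊆ Vstar G c k ∧ ∀ u ∈ S, ∀ v ∈ S, ¬ (Gstar G c k).Adj u v) :=
  stmt14_general G c k hk hck S hcard
end

section
/- Let G = (V, E) be a graph with vertex weights w : V → ℚ≥0 and edge weights c : E → ℕ. Suppose V = V₁ ∪ V₂ with V₁ ∩ V₂ = {u}, and E = E₁ ∪ E₂ where Gᵢ = (Vᵢ, Eᵢ) are graphs with no edges between V₁ \ {u} and V₂ \ {u}. Let d = γ_m(G₁, w, c | u) − γ_m(G₁, w, c), where γ_m(G₁, w, c | u) is the minimum weight of a monitoring set of (G₁, c) containing u. Let w' agree with w except w'(u) = d. Then γ_m(G, w, c) = γ_m(G₁, w, c) + γ_m(G₂, w', c). -/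
open scoped NNRat

lemma monitoringSet_mono {V : Type*} [Fintype V] {G : SimpleGraph V} {c : Sym2 V → ℕ}
    {A B : Set V} (hAB : A ⊆ B) (hA : monitoringSet G c A) : monitoringSet G c B := by
  intro x y hxy
  exact (hA x y hxy).trans (Set.ncard_le_ncard (fun v hv => ⟨hAB hv.1, hv.2⟩) (Set.toFinite _))

lemma sum_union_le' {V : Type*} [DecidableEq V] (s t : Finset V) (f : V → ℚ≥0) :
    ∑ x ∈ s ∪ t, f x ≤ ∑ x ∈ s, f x + ∑ x ∈ t, f x := by
  calc ∑ x ∈ s ∪ t, f x ≤ ∑ x ∈ s ∪ t, f x + ∑ x ∈ s ∩ t, f x := le_self_add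
    _ = _ := Finset.sum_union_inter

theorem stmt17 {V : Type*} [Fintype V] [DecidableEq V]
    (G G₁ G₂ : SimpleGraph V) (V₁ V₂ : Set V) (u : V)
    (w : V → ℚ≥0) (c : Sym2 V → ℕ)
    (hG : G = G₁ ⊔ G₂)
    (hE₁ : ∀ x y, G₁.Adj x y → x ∈ V₁ ∧ y ∈ V₁)
    (hE₂ : ∀ x y, G₂.Adj x y → x ∈ V₂ ∧ y ∈ V₂)
    (hcover : V₁ ∪ V₂ = Set.univ)
    (hinter : V₁ ∩ V₂ = {u})
    (m₁ m₁u m₂ : ℚ≥0)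
    (h₁ : IsLeast {q : ℚ≥0 | ∃ S : Finset V, monitoringSet G₁ c (↑S : Set V) ∧
      ∑ v ∈ S, w v = q} m₁)
    (h₁u : IsLeast {q : ℚ≥0 | ∃ S : Finset V, monitoringSet G₁ c (↑S : Set V) ∧
      u ∈ S ∧ ∑ v ∈ S, w v = q} m₁u)
    (h₂ : IsLeast {q : ℚ≥0 | ∃ S : Finset V, monitoringSet G₂ c (↑S : Set V) ∧
      ∑ v ∈ S, Function.update w u (m₁u - m₁) v = q} m₂) :
    IsLeast {q : ℚ≥0 | ∃ S : Finset V, monitoringSet G c (↑S : Set V) ∧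
      ∑ v ∈ S, w v = q} (m₁ + m₂) := by
  classical
  subst hG
  set w' : V → ℚ≥0 := Function.update w u (m₁u - m₁) with hw'
  obtain ⟨⟨Su, hSu_mon, hSu_u, hSu_sum⟩, h₁u_lb⟩ := h₁u
  obtain ⟨⟨S₁, hS₁_mon, hS₁_sum⟩, h₁_lb⟩ := h₁
  obtain ⟨⟨S₂, hS₂_mon, hS₂_sum⟩, h₂_lb⟩ := h₂
  have hm : m₁ ≤ m₁u := h₁_lb ⟨Su, hSu_mon, hSu_sum⟩
  set d := m₁u - m₁ with hd
  have hmd : m₁ + d = m₁u := add_tsub_cancel_of_le hm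
  have huV : u ∈ V₁ ∩ V₂ := by rw [hinter]; rfl
  have memu : ∀ v : V, v ∈ V₁ → v ∈ V₂ → v = u := by
    intro v h1 h2
    have : v ∈ ({u} : Set V) := hinter ▸ ⟨h1, h2⟩
    exact this
  -- key adjacency lemmas
  have key₁ : ∀ v x y, G₁.Adj x y → (G₁ ⊔ G₂).Adj v x → (G₁ ⊔ G₂).Adj v y →
      G₁.Adj v x ∧ G₁.Adj v y := by
    intro v x y hxy hvx hvy
    rcases hvx with h1 | h2
    · rcases hvy with h1' | h2'
      · exact ⟨h1, h1'⟩
      · exfalso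
        have hyu : y = u := memu y (hE₁ x y hxy).2 (hE₂ v y h2').2
        have hvu : v = u := memu v (hE₁ v x h1).1 (hE₂ v y h2').1
        exact h2'.ne (hvu.trans hyu.symm)
    · exfalso
      have hxu : x = u := memu x (hE₁ x y hxy).1 (hE₂ v x h2).2
      rcases hvy with h1' | h2'
      · have hvu : v = u := memu v (hE₁ v y h1').1 (hE₂ v x h2).1
        exact h2.ne (hvu.trans hxu.symm)
      · have hyu : y = u := memu y (hE₁ x y hxy).2 (hE₂ v y h2').2
        exact hxy.ne (hxu.trans hyu.symm)
  have key₂ : ∀ v x y, G₂.Adj x y → (G₁ ⊔ G₂).Adj v x → (G₁ ⊔ G₂).Adj v y →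
      G₂.Adj v x ∧ G₂.Adj v y := by
    intro v x y hxy hvx hvy
    rcases hvx with h1 | h2
    · exfalso
      have hxu : x = u := memu x (hE₁ v x h1).2 (hE₂ x y hxy).1
      rcases hvy with h1' | h2'
      · have hyu : y = u := memu y (hE₁ v y h1').2 (hE₂ x y hxy).2
        exact hxy.ne (hxu.trans hyu.symm)
      · have hvu : v = u := memu v (hE₁ v x h1).1 (hE₂ v y h2').1
        exact h1.ne (hvu.trans hxu.symm)
    · rcases hvy with h1' | h2'
      · exfalso
        have hyu : y = u := memu y (hE₁ v y h1').2 (hE₂ x y hxy).2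
        have hvu : v = u := memu v (hE₁ v y h1').1 (hE₂ v x h2).1
        exact SimpleGraph.Adj.ne h1' (hvu.trans hyu.symm)
      · exact ⟨h2, h2'⟩
  -- combine monitoring sets
  have combine : ∀ A : Set V, monitoringSet G₁ c A → monitoringSet G₂ c A →
      monitoringSet (G₁ ⊔ G₂) c A := by
    intro A hA1 hA2 x y hxy
    rcases hxy with h | h
    · refine (hA1 x y h).trans (Set.ncard_le_ncard ?_ (Set.toFinite _))
      exact fun v hv => ⟨hv.1, Or.inl hv.2.1, Or.inl hv.2.2⟩
    · refine (hA2 x y h).trans (Set.ncard_le_ncard ?_ (Set.toFinite _))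
      exact fun v hv => ⟨hv.1, Or.inr hv.2.1, Or.inr hv.2.2⟩
  -- restriction
  have restrict₁ : ∀ A : Set V, monitoringSet (G₁ ⊔ G₂) c A →
      monitoringSet G₁ c (A ∩ V₁) := by
    intro A hA x y hxy
    refine (hA x y (Or.inl hxy)).trans (Set.ncard_le_ncard ?_ (Set.toFinite _))
    intro v hv
    obtain ⟨h1, h2⟩ := key₁ v x y hxy hv.2.1 hv.2.2
    exact ⟨⟨hv.1, (hE₁ v x h1).1⟩, h1, h2⟩
  have restrict₂ : ∀ A : Set V, monitoringSet (G₁ ⊔ G₂) c A →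
      monitoringSet G₂ c (A ∩ V₂) := by
    intro A hA x y hxy
    refine (hA x y (Or.inr hxy)).trans (Set.ncard_le_ncard ?_ (Set.toFinite _))
    intro v hv
    obtain ⟨h1, h2⟩ := key₂ v x y hxy hv.2.1 hv.2.2
    exact ⟨⟨hv.1, (hE₂ v x h1).1⟩, h1, h2⟩
  -- lower bound
  have lb : ∀ S : Finset V, monitoringSet (G₁ ⊔ G₂) c ↑S → m₁ + m₂ ≤ ∑ v ∈ S, w v := by
    intro S hS
    set T₁ := S.filter (· ∈ V₁) with hT₁def
    set T₂ := S.filter (· ∈ V₂) with hT₂def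
    have hcT₁ : (↑T₁ : Set V) = ↑S ∩ V₁ := by ext v; simp [hT₁def]
    have hcT₂ : (↑T₂ : Set V) = ↑S ∩ V₂ := by ext v; simp [hT₂def]
    have hmT₁ : monitoringSet G₁ c ↑T₁ := hcT₁ ▸ restrict₁ _ hS
    have hmT₂ : monitoringSet G₂ c ↑T₂ := hcT₂ ▸ restrict₂ _ hS
    by_cases hu : u ∈ S
    · have huT₁ : u ∈ T₁ := Finset.mem_filter.mpr ⟨hu, huV.1⟩
      have huT₂ : u ∈ T₂ := Finset.mem_filter.mpr ⟨hu, huV.2⟩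
      have h1 : m₁u ≤ ∑ v ∈ T₁, w v := h₁u_lb ⟨T₁, hmT₁, huT₁, rfl⟩
      have h2 : m₂ ≤ ∑ v ∈ T₂, w' v := h₂_lb ⟨T₂, hmT₂, rfl⟩
      have e2 : ∑ v ∈ T₂, w' v = d + ∑ v ∈ T₂.erase u, w v := by
        rw [← Finset.add_sum_erase _ _ huT₂]
        congr 1
        · simp [hw']
        · exact Finset.sum_congr rfl fun v hv =>
            Function.update_of_ne (Finset.ne_of_mem_erase hv) _ _
      have hdisj : Disjoint T₁ (T₂.erase u) := by
        rw [Finset.disjoint_left]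
        intro v hv1 hv2
        have := memu v (Finset.mem_filter.mp hv1).2
          (Finset.mem_filter.mp (Finset.mem_of_mem_erase hv2)).2
        exact (Finset.ne_of_mem_erase hv2) this
      have hsub : T₁ ∪ T₂.erase u ⊆ S := by
        intro v hv
        rcases Finset.mem_union.mp hv with h | h
        · exact (Finset.mem_filter.mp h).1
        · exact (Finset.mem_filter.mp (Finset.mem_of_mem_erase h)).1
      have hkey : m₁ + m₂ + d ≤ (∑ v ∈ T₁, w v + ∑ v ∈ T₂.erase u, w v) + d := by
        calc m₁ + m₂ + d = m₁u + m₂ := by rw [← hmd]; ring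
          _ ≤ (∑ v ∈ T₁, w v) + (d + ∑ v ∈ T₂.erase u, w v) :=
              add_le_add h1 (e2 ▸ h2)
          _ = (∑ v ∈ T₁, w v + ∑ v ∈ T₂.erase u, w v) + d := by ring
      have hstep : m₁ + m₂ ≤ ∑ v ∈ T₁, w v + ∑ v ∈ T₂.erase u, w v :=
        le_of_add_le_add_right hkey
      calc m₁ + m₂ ≤ ∑ v ∈ T₁, w v + ∑ v ∈ T₂.erase u, w v := hstep
        _ = ∑ v ∈ T₁ ∪ T₂.erase u, w v := (Finset.sum_union hdisj).symm
        _ ≤ ∑ v ∈ S, w v := Finset.sum_le_sum_of_subset hsub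
    · have h1 : m₁ ≤ ∑ v ∈ T₁, w v := h₁_lb ⟨T₁, hmT₁, rfl⟩
      have e2 : ∑ v ∈ T₂, w' v = ∑ v ∈ T₂, w v :=
        Finset.sum_congr rfl fun v hv => Function.update_of_ne
          (fun h => hu (by rw [← h]; exact (Finset.mem_filter.mp hv).1)) _ _
      have h2 : m₂ ≤ ∑ v ∈ T₂, w v := e2 ▸ h₂_lb ⟨T₂, hmT₂, rfl⟩
      have hdisj : Disjoint T₁ T₂ := by
        rw [Finset.disjoint_left]
        intro v hv1 hv2
        exact hu ((memu v (Finset.mem_filter.mp hv1).2 (Finset.mem_filter.mp hv2).2)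
          ▸ (Finset.mem_filter.mp hv1).1)
      have hsub : T₁ ∪ T₂ ⊆ S := by
        intro v hv
        rcases Finset.mem_union.mp hv with h | h
        · exact (Finset.mem_filter.mp h).1
        · exact (Finset.mem_filter.mp h).1
      calc m₁ + m₂ ≤ ∑ v ∈ T₁, w v + ∑ v ∈ T₂, w v := add_le_add h1 h2
        _ = ∑ v ∈ T₁ ∪ T₂, w v := (Finset.sum_union hdisj).symm
        _ ≤ ∑ v ∈ S, w v := Finset.sum_le_sum_of_subset hsub
  -- witness
  have witness : ∃ S : Finset V, monitoringSet (G₁ ⊔ G₂) c ↑S ∧ ∑ v ∈ S, w v ≤ m₁ + m₂ := by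
    by_cases hu₂ : u ∈ S₂
    · refine ⟨Su ∪ S₂, ?_, ?_⟩
      · exact combine _ (monitoringSet_mono (by simp) hSu_mon)
          (monitoringSet_mono (by simp) hS₂_mon)
      · have hUeq : Su ∪ S₂ = Su ∪ S₂.erase u := by
          ext v
          simp only [Finset.mem_union, Finset.mem_erase]
          constructor
          · rintro (h | h)
            · exact Or.inl h
            · by_cases hvu : v = u
              · exact Or.inl (hvu ▸ hSu_u)
              · exact Or.inr ⟨hvu, h⟩
          · rintro (h | h)
            · exact Or.inl h
            · exact Or.inr h.2
        have e2 : m₂ = d + ∑ v ∈ S₂.erase u, w v := by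
          rw [← hS₂_sum, ← Finset.add_sum_erase _ _ hu₂]
          congr 1
          · simp [hw']
          · exact Finset.sum_congr rfl fun v hv =>
              Function.update_of_ne (Finset.ne_of_mem_erase hv) _ _
        calc ∑ v ∈ Su ∪ S₂, w v = ∑ v ∈ Su ∪ S₂.erase u, w v := by rw [hUeq]
          _ ≤ ∑ v ∈ Su, w v + ∑ v ∈ S₂.erase u, w v := sum_union_le' _ _ _
          _ = m₁u + ∑ v ∈ S₂.erase u, w v := by rw [hSu_sum]
          _ = m₁ + (d + ∑ v ∈ S₂.erase u, w v) := by rw [← hmd]; ring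
          _ = m₁ + m₂ := by rw [← e2]
    · refine ⟨S₁ ∪ S₂, ?_, ?_⟩
      · exact combine _ (monitoringSet_mono (by simp) hS₁_mon)
          (monitoringSet_mono (by simp) hS₂_mon)
      · have e2 : ∑ v ∈ S₂, w' v = ∑ v ∈ S₂, w v :=
          Finset.sum_congr rfl fun v hv => Function.update_of_ne
            (fun h => hu₂ (by rw [← h]; exact hv)) _ _
        calc ∑ v ∈ S₁ ∪ S₂, w v ≤ ∑ v ∈ S₁, w v + ∑ v ∈ S₂, w v := sum_union_le' _ _ _
          _ = m₁ + m₂ := by rw [hS₁_sum, ← e2, hS₂_sum]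
  obtain ⟨S, hSmon, hSle⟩ := witness
  constructor
  · exact ⟨S, hSmon, le_antisymm hSle (lb S hSmon)⟩
  · rintro q ⟨S', hS', rfl⟩
    exact lb S' hS'
end

section
/- Let G = (V, E) be a unit interval graph with a unit interval realization, and let K be a clique of G. Then |N[K]| ≤ 3ω(G), where N[K] is the closed neighborhood of K and ω(G) is the clique number of G. -/
theorem stmt18 {V : Type*} [Fintype V] (G : SimpleGraph V) (a : V → ℝ)
    (hrep : ∀ u v : V, G.Adj u v ↔ u ≠ v ∧ |a u - a v| ≤ 1)
    (hdist : ∀ u v : V, u ≠ v → a u ≠ a v ∧ a u ≠ a v + 1)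
    (K : Set V) (hK : G.IsClique K) (n : ℕ)
    (hn : IsGreatest {m : ℕ | ∃ t : Finset V, G.IsClique (↑t : Set V) ∧ t.card = m} n) :
    (⋃ v ∈ K, insert v (G.neighborSet v)).ncard ≤ 3 * n := by
  classical
  rcases K.eq_empty_or_nonempty with hKe | ⟨k0, hk0⟩
  · simp [hKe]
  obtain ⟨k, hkK, hkmin⟩ := (K.toFinite.toFinset).exists_min_image a
    ⟨k0, by simpa using hk0⟩
  rw [Set.Finite.mem_toFinset] at hkK
  have hkmin' : ∀ v ∈ K, a k ≤ a v := fun v hv =>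
    hkmin v (by simpa using hv)
  set m := a k with hm
  set S := (⋃ v ∈ K, insert v (G.neighborSet v)) with hS
  have key : ∀ u ∈ S, m - 1 ≤ a u ∧ a u ≤ m + 2 := by
    intro u hu
    simp only [hS, Set.mem_iUnion, Set.mem_insert_iff,
      SimpleGraph.mem_neighborSet] at hu
    obtain ⟨v, hvK, huv⟩ := hu
    have hv1 : m ≤ a v := hkmin' v hvK
    have hv2 : a v ≤ m + 1 := by
      by_cases h : v = k
      · rw [h]; linarith
      · have hA := hK hvK hkK h
        rw [hrep] at hA
        have := abs_sub_le_iff.mp hA.2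
        linarith [this.1, this.2]
    have huv' : |a u - a v| ≤ 1 := by
      rcases huv with rfl | h
      · simp
      · rw [hrep] at h; rw [abs_sub_comm]; exact h.2
    have := abs_sub_le_iff.mp huv'
    constructor <;> linarith [this.1, this.2]
  have hbound : ∀ t : Finset V, G.IsClique (↑t : Set V) → t.card ≤ n :=
    fun t ht => hn.2 ⟨t, ht, rfl⟩
  have hSfin : S.Finite := Set.toFinite _
  set Sf := hSfin.toFinset with hSf
  have hmem : ∀ u, u ∈ Sf → u ∈ S := fun u hu => (Set.Finite.mem_toFinset _).mp hu
  set T1 := Sf.filter (fun u => a u < m) with hT1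
  set T2 := Sf.filter (fun u => m ≤ a u ∧ a u < m + 1) with hT2
  set T3 := Sf.filter (fun u => m + 1 ≤ a u) with hT3
  have clique_of : ∀ (T : Finset V),
      (∀ u ∈ T, ∀ v ∈ T, |a u - a v| ≤ 1) → G.IsClique (↑T : Set V) := by
    intro T h u hu v hv huv
    rw [hrep]
    exact ⟨huv, h u hu v hv⟩
  have h1 : T1.card ≤ n := by
    apply hbound; apply clique_of
    intro u hu v hv
    simp only [hT1, Finset.mem_filter] at hu hv
    have k1 := key u (hmem u hu.1)
    have k2 := key v (hmem v hv.1)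
    rw [abs_sub_le_iff]
    constructor <;> linarith [hu.2, hv.2, k1.1, k2.1]
  have h2 : T2.card ≤ n := by
    apply hbound; apply clique_of
    intro u hu v hv
    simp only [hT2, Finset.mem_filter] at hu hv
    rw [abs_sub_le_iff]
    constructor <;> linarith [hu.2.1, hu.2.2, hv.2.1, hv.2.2]
  have h3 : T3.card ≤ n := by
    apply hbound; apply clique_of
    intro u hu v hv
    simp only [hT3, Finset.mem_filter] at hu hv
    have k1 := key u (hmem u hu.1)
    have k2 := key v (hmem v hv.1)
    rw [abs_sub_le_iff]
    constructor <;> linarith [hu.2, hv.2, k1.2, k2.2]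
  have hsub : Sf ⊆ T1 ∪ T2 ∪ T3 := by
    intro u hu
    simp only [hT1, hT2, hT3, Finset.mem_union, Finset.mem_filter]
    rcases lt_or_ge (a u) m with h | h
    · exact Or.inl (Or.inl ⟨hu, h⟩)
    · rcases lt_or_ge (a u) (m + 1) with h' | h'
      · exact Or.inl (Or.inr ⟨hu, h, h'⟩)
      · exact Or.inr ⟨hu, h'⟩
  have hcard : S.ncard = Sf.card := Set.ncard_eq_toFinset_card _ hSfin
  calc S.ncard = Sf.card := hcard
    _ ≤ (T1 ∪ T2 ∪ T3).card := Finset.card_le_card hsub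
    _ ≤ T1.card + T2.card + T3.card := by
        calc (T1 ∪ T2 ∪ T3).card ≤ (T1 ∪ T2).card + T3.card :=
              Finset.card_union_le _ _
          _ ≤ T1.card + T2.card + T3.card := by
              linarith [Finset.card_union_le T1 T2]
    _ ≤ 3 * n := by omega
end
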